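/- arXiv:2102.03288 — 5 statements merged into one kernel-verified Lean document; each statement's English description precedes it below -/
import Mathlib

section
/- Let X be a Banach space with the reconstruction property, and let (f_n)_{n∈ℕ} in X* and (τ_n)_{n∈ℕ} in X form an approximate Bessel sequence for X. Then there exist sequences (h_n)_{n∈ℕ} in X* and (ρ_n)_{n∈ℕ} in X such that the combined pair ((f_n)∪(h_n), (τ_n)∪(ρ_n)) (indexed over the disjoint union ℕ ⊕ ℕ) is an approximate Schauder frame for X. -/
open Filter Topology

theorem approxBessel_expands_to_ASF_of_reconstruction_general
    {𝕜 : Type*} [RCLike 𝕜] {X : Type*} [NormedAddCommGroup X]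
    [NormedSpace 𝕜 X]
    -- `X` has the reconstruction property
    (hrec : ∃ (F : ℕ → X →L[𝕜] 𝕜) (v : ℕ → X), ∀ x : X,
      Tendsto (fun N => ∑ i ∈ Finset.range N, F i x • v i) atTop (𝓝 x))
    -- `(f, τ)` is an approximate Bessel sequence with frame operator `S`
    (f : ℕ → X →L[𝕜] 𝕜) (τ : ℕ → X) (S : X →L[𝕜] X)
    (hBessel : ∀ x : X,
      Tendsto (fun N => ∑ i ∈ Finset.range N, f i x • τ i) atTop (𝓝 (S x))) :
    -- there is an expansion `((f) ∪ (h), (τ) ∪ (ρ))` which is an approximate Schauder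
    -- frame for `X`, i.e. whose frame operator is a bounded invertible operator `T`
    ∃ (h : ℕ → X →L[𝕜] 𝕜) (ρ : ℕ → X) (T : X ≃L[𝕜] X), ∀ x : X, ∃ y z : X,
      Tendsto (fun N => ∑ i ∈ Finset.range N, f i x • τ i) atTop (𝓝 y) ∧
      Tendsto (fun N => ∑ i ∈ Finset.range N, h i x • ρ i) atTop (𝓝 z) ∧
      y + z = T x := by
  obtain ⟨F, v, hreconstruct⟩ := hrec
  -- `hᵢ = Fᵢ ∘ (I - S)`, `ρ = v` reconstruct `x - S x`, so the expanded frame operator is `I`.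
  refine ⟨fun i => (F i).comp (ContinuousLinearMap.id 𝕜 X - S), v,
    ContinuousLinearEquiv.refl 𝕜 X, fun x => ⟨S x, x - S x, hBessel x, ?_, add_sub_cancel _ _⟩⟩
  exact hreconstruct (x - S x)

/-- If a Banach space `X` has the reconstruction property, then every
approximate Bessel sequence `(f, τ)` for `X` can be expanded (by sequences `h` in `X*`
and `ρ` in `X`, giving a pair indexed over `ℕ ⊕ ℕ`) to an approximate Schauder frame. -/
theorem approxBessel_expands_to_ASF_of_reconstruction
    {𝕜 : Type*} [RCLike 𝕜] {X : Type*} [NormedAddCommGroup X]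
    [NormedSpace 𝕜 X] [CompleteSpace X]
    -- `X` has the reconstruction property
    (hrec : ∃ (F : ℕ → X →L[𝕜] 𝕜) (v : ℕ → X), ∀ x : X,
      Tendsto (fun N => ∑ i ∈ Finset.range N, F i x • v i) atTop (𝓝 x))
    -- `(f, τ)` is an approximate Bessel sequence with frame operator `S`
    (f : ℕ → X →L[𝕜] 𝕜) (τ : ℕ → X) (S : X →L[𝕜] X)
    (hBessel : ∀ x : X,
      Tendsto (fun N => ∑ i ∈ Finset.range N, f i x • τ i) atTop (𝓝 (S x))) :
    -- there is an expansion `((f) ∪ (h), (τ) ∪ (ρ))` which is an approximate Schauder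
    -- frame for `X`, i.e. whose frame operator is a bounded invertible operator `T`
    ∃ (h : ℕ → X →L[𝕜] 𝕜) (ρ : ℕ → X) (T : X ≃L[𝕜] X), ∀ x : X, ∃ y z : X,
      Tendsto (fun N => ∑ i ∈ Finset.range N, f i x • τ i) atTop (𝓝 y) ∧
      Tendsto (fun N => ∑ i ∈ Finset.range N, h i x • ρ i) atTop (𝓝 z) ∧
      y + z = T x :=
  approxBessel_expands_to_ASF_of_reconstruction_general hrec f τ S hBessel
end

section
/- Let X be a Banach space, let (f_n)_{n∈ℕ} in X* and (τ_n)_{n∈ℕ} in X form an approximate Bessel sequence for X with frame operator S_{f,τ}, and let (g_n)_{n∈ℕ} in X* and (ω_n)_{n∈ℕ} in X satisfy x = ∑_{n=1}^∞ g_n(x)ω_n for every x ∈ X. Define h_n := g_n and ρ_n := (I_X − S_{f,τ})ω_n for all n ∈ ℕ. Then for every x ∈ X one has ∑_{n=1}^∞ f_n(x)τ_n + ∑_{n=1}^∞ h_n(x)ρ_n = x; in particular, the combined pair ((f_n)∪(h_n), (τ_n)∪(ρ_n)) is an approximate Schauder frame for X whose frame operator is the identity I_X. -/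
open Filter Topology

/-! The second series is the image of the reconstruction series `∑ gₙ(x) ωₙ = x` under the
continuous operator `I - S`, so it converges to `x - S x`, which complements the first sum `S x`. -/

theorem ContinuousLinearMap.tendsto_sum_smul_apply {R M M₂ : Type*} [Semiring R]
    [TopologicalSpace M] [AddCommMonoid M] [Module R M]
    [TopologicalSpace M₂] [AddCommMonoid M₂] [Module R M₂]
    (T : M →L[R] M₂) {c : ℕ → R} {v : ℕ → M} {x : M}
    (hx : Tendsto (fun N => ∑ i ∈ Finset.range N, c i • v i) atTop (𝓝 x)) :
    Tendsto (fun N => ∑ i ∈ Finset.range N, c i • T (v i)) atTop (𝓝 (T x)) := by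
  simpa only [Function.comp_def, map_sum, map_smul] using (T.continuous.tendsto x).comp hx

theorem expansion_with_identity_frame_operator_general
    {𝕜 : Type*} [RCLike 𝕜] {X : Type*} [NormedAddCommGroup X]
    [NormedSpace 𝕜 X]
    (f : ℕ → X →L[𝕜] 𝕜) (τ : ℕ → X) (S : X →L[𝕜] X)
    (hBessel : ∀ x : X,
      Tendsto (fun N => ∑ i ∈ Finset.range N, f i x • τ i) atTop (𝓝 (S x)))
    (g : ℕ → X →L[𝕜] 𝕜) (ω : ℕ → X)
    (hrec : ∀ x : X,
      Tendsto (fun N => ∑ i ∈ Finset.range N, g i x • ω i) atTop (𝓝 x))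
    -- `hₙ := gₙ` and `ρₙ := (I_X - S) ωₙ`
    (h : ℕ → X →L[𝕜] 𝕜) (ρ : ℕ → X)
    (hdef : ∀ n, h n = g n)
    (ρdef : ∀ n, ρ n = (ContinuousLinearMap.id 𝕜 X - S) (ω n)) :
    ∀ x : X, ∃ y z : X,
      Tendsto (fun N => ∑ i ∈ Finset.range N, f i x • τ i) atTop (𝓝 y) ∧
      Tendsto (fun N => ∑ i ∈ Finset.range N, h i x • ρ i) atTop (𝓝 z) ∧
      y + z = x := by
  intro x
  refine ⟨S x, (ContinuousLinearMap.id 𝕜 X - S) x, hBessel x, ?_, ?_⟩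
  · simpa only [hdef, ρdef] using
      (ContinuousLinearMap.id 𝕜 X - S).tendsto_sum_smul_apply (hrec x)
  · simp

/-- Let `(f, τ)` be an approximate Bessel sequence for `X` with frame
operator `S`, and let `(g, ω)` satisfy `x = ∑ₙ gₙ(x) ωₙ` for all `x`. With `hₙ := gₙ`
and `ρₙ := (I - S) ωₙ`, one has `∑ₙ fₙ(x) τₙ + ∑ₙ hₙ(x) ρₙ = x` for all `x`; in
particular the combined pair is an ASF for `X` whose frame operator is the identity. -/
theorem expansion_with_identity_frame_operator
    {𝕜 : Type*} [RCLike 𝕜] {X : Type*} [NormedAddCommGroup X]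
    [NormedSpace 𝕜 X] [CompleteSpace X]
    (f : ℕ → X →L[𝕜] 𝕜) (τ : ℕ → X) (S : X →L[𝕜] X)
    (hBessel : ∀ x : X,
      Tendsto (fun N => ∑ i ∈ Finset.range N, f i x • τ i) atTop (𝓝 (S x)))
    (g : ℕ → X →L[𝕜] 𝕜) (ω : ℕ → X)
    (hrec : ∀ x : X,
      Tendsto (fun N => ∑ i ∈ Finset.range N, g i x • ω i) atTop (𝓝 x))
    -- `hₙ := gₙ` and `ρₙ := (I_X - S) ωₙ`
    (h : ℕ → X →L[𝕜] 𝕜) (ρ : ℕ → X)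
    (hdef : ∀ n, h n = g n)
    (ρdef : ∀ n, ρ n = (ContinuousLinearMap.id 𝕜 X - S) (ω n)) :
    ∀ x : X, ∃ y z : X,
      Tendsto (fun N => ∑ i ∈ Finset.range N, f i x • τ i) atTop (𝓝 y) ∧
      Tendsto (fun N => ∑ i ∈ Finset.range N, h i x • ρ i) atTop (𝓝 z) ∧
      y + z = x :=
  expansion_with_identity_frame_operator_general f τ S hBessel g ω hrec h ρ hdef ρdef
end

section
/- Let X be a Banach space, let λ ∈ 𝕜 \ {0}, let (f_n)_{n∈ℕ} in X* and (τ_n)_{n∈ℕ} in X form an approximate Bessel sequence for X with frame operator S_{f,τ}, and let (g_n)_{n∈ℕ} in X* and (ω_n)_{n∈ℕ} in X satisfy x = ∑_{n=1}^∞ g_n(x)ω_n for every x ∈ X. Define h_n := g_n and ρ_n := (λI_X − S_{f,τ})ω_n for all n ∈ ℕ. Then for every x ∈ X one has ∑_{n=1}^∞ f_n(x)τ_n + ∑_{n=1}^∞ h_n(x)ρ_n = λx; in particular, the combined pair ((f_n)∪(h_n), (τ_n)∪(ρ_n)) is a λ-tight approximate Schauder frame for X. -/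
/-! The perturbation `ρₙ = (λI - S) ωₙ` is the image of the reconstructing sequence under a
bounded operator, so `∑ₙ gₙ(x) ρₙ` converges to `(λI - S) x`; adding `∑ₙ fₙ(x) τₙ = S x`
leaves `λx`. -/

open Filter Topology

theorem Filter.Tendsto.sum_smul_map {𝕜 X Y : Type*} [NormedField 𝕜]
    [NormedAddCommGroup X] [NormedSpace 𝕜 X] [NormedAddCommGroup Y] [NormedSpace 𝕜 Y]
    (T : X →L[𝕜] Y) {c : ℕ → 𝕜} {ω : ℕ → X} {x : X}
    (hx : Tendsto (fun N => ∑ i ∈ Finset.range N, c i • ω i) atTop (𝓝 x)) :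
    Tendsto (fun N => ∑ i ∈ Finset.range N, c i • T (ω i)) atTop (𝓝 (T x)) := by
  simpa only [Function.comp_def, map_sum, map_smul] using (T.continuous.tendsto x).comp hx

theorem expansion_to_tight_ASF_general
    {𝕜 : Type*} [RCLike 𝕜] {X : Type*} [NormedAddCommGroup X]
    [NormedSpace 𝕜 X]
    (lam : 𝕜)
    (f : ℕ → X →L[𝕜] 𝕜) (τ : ℕ → X) (S : X →L[𝕜] X)
    (hBessel : ∀ x : X,
      Tendsto (fun N => ∑ i ∈ Finset.range N, f i x • τ i) atTop (𝓝 (S x)))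
    (g : ℕ → X →L[𝕜] 𝕜) (ω : ℕ → X)
    (hrec : ∀ x : X,
      Tendsto (fun N => ∑ i ∈ Finset.range N, g i x • ω i) atTop (𝓝 x))
    -- `hₙ := gₙ` and `ρₙ := (λ I_X - S) ωₙ`
    (h : ℕ → X →L[𝕜] 𝕜) (ρ : ℕ → X)
    (hdef : ∀ n, h n = g n)
    (ρdef : ∀ n, ρ n = (lam • ContinuousLinearMap.id 𝕜 X - S) (ω n)) :
    ∀ x : X, ∃ y z : X,
      Tendsto (fun N => ∑ i ∈ Finset.range N, f i x • τ i) atTop (𝓝 y) ∧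
      Tendsto (fun N => ∑ i ∈ Finset.range N, h i x • ρ i) atTop (𝓝 z) ∧
      y + z = lam • x := by
  intro x
  set T := lam • ContinuousLinearMap.id 𝕜 X - S
  refine ⟨S x, T x, hBessel x, ?_, ?_⟩
  · simpa only [hdef, ρdef] using (hrec x).sum_smul_map T
  · simp [T]

/-- Let `λ ≠ 0`, let `(f, τ)` be an approximate Bessel sequence for `X`
with frame operator `S`, and let `(g, ω)` satisfy `x = ∑ₙ gₙ(x) ωₙ` for all `x`. With
`hₙ := gₙ` and `ρₙ := (λI - S) ωₙ`, one has `∑ₙ fₙ(x) τₙ + ∑ₙ hₙ(x) ρₙ = λx` for all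
`x`; in particular the combined pair is a `λ`-tight approximate Schauder frame. -/
theorem expansion_to_tight_ASF
    {𝕜 : Type*} [RCLike 𝕜] {X : Type*} [NormedAddCommGroup X]
    [NormedSpace 𝕜 X] [CompleteSpace X]
    (lam : 𝕜) (hlam : lam ≠ 0)
    (f : ℕ → X →L[𝕜] 𝕜) (τ : ℕ → X) (S : X →L[𝕜] X)
    (hBessel : ∀ x : X,
      Tendsto (fun N => ∑ i ∈ Finset.range N, f i x • τ i) atTop (𝓝 (S x)))
    (g : ℕ → X →L[𝕜] 𝕜) (ω : ℕ → X)
    (hrec : ∀ x : X,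
      Tendsto (fun N => ∑ i ∈ Finset.range N, g i x • ω i) atTop (𝓝 x))
    -- `hₙ := gₙ` and `ρₙ := (λ I_X - S) ωₙ`
    (h : ℕ → X →L[𝕜] 𝕜) (ρ : ℕ → X)
    (hdef : ∀ n, h n = g n)
    (ρdef : ∀ n, ρ n = (lam • ContinuousLinearMap.id 𝕜 X - S) (ω n)) :
    ∀ x : X, ∃ y z : X,
      Tendsto (fun N => ∑ i ∈ Finset.range N, f i x • τ i) atTop (𝓝 y) ∧
      Tendsto (fun N => ∑ i ∈ Finset.range N, h i x • ρ i) atTop (𝓝 z) ∧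
      y + z = lam • x :=
  expansion_to_tight_ASF_general lam f τ S hBessel g ω hrec h ρ hdef ρdef
end

section
/- Let X be a Banach space which admits a Schauder basis, and let (f_n)_{n∈ℕ} in X* and (τ_n)_{n∈ℕ} in X form an approximate Bessel sequence for X. Then there exist sequences (h_n)_{n∈ℕ} in X* and (ρ_n)_{n∈ℕ} in X such that the combined pair ((f_n)∪(h_n), (τ_n)∪(ρ_n)) (indexed over ℕ ⊕ ℕ) is an approximate Schauder frame for X. -/
/-!
Coordinates with respect to a sequence along which every vector has a unique expansion are
continuous, by the closed graph theorem applied to the map sending `x` to the sequence of partial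
sums of its expansion in the Banach space `ℕ →ᵇ X`. If `xₖ → x` and the partial-sum sequences of
the `xₖ` converge uniformly to `v`, then `v` is again a partial-sum sequence (the lines `𝕜 ∙ eₙ` are
closed) and converges to `x`, so by uniqueness it is the one of `x`. Hence `e` is a Schauder basis
with continuous coordinate functionals `eₙ*`, and `hₙ = eₙ* ∘ (1 - S)`, `ρₙ = eₙ` complete the
approximate Bessel sequence to one whose frame operator is `S + (1 - S) = 1`.
-/

open Filter Topology BoundedContinuousFunction

section

variable {𝕜 : Type*} [NontriviallyNormedField 𝕜] {X : Type*} [NormedAddCommGroup X]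
  [NormedSpace 𝕜 X] {e : ℕ → X}

variable (𝕜) in
def HasUniqueExpansion (e : ℕ → X) : Prop :=
  ∀ x : X, ∃! c : ℕ → 𝕜, Tendsto (fun N => ∑ i ∈ Finset.range N, c i • e i) atTop (𝓝 x)

theorem exists_eq_sum_range_of_tendsto [CompleteSpace 𝕜] {c : ℕ → ℕ → 𝕜} {v : ℕ → X}
    (hv : ∀ N, Tendsto (fun k => ∑ i ∈ Finset.range N, c k i • e i) atTop (𝓝 (v N))) :
    ∃ a : ℕ → 𝕜, ∀ N, v N = ∑ i ∈ Finset.range N, a i • e i := by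
  have hstep (n : ℕ) : ∃ a : 𝕜, a • e n = v (n + 1) - v n := by
    refine Submodule.mem_span_singleton.1 ((Submodule.closed_of_finiteDimensional _).mem_of_tendsto
      ((hv (n + 1)).sub (hv n)) (Eventually.of_forall fun k => ?_))
    simpa [Finset.sum_range_succ] using
      Submodule.smul_mem _ (c k n) (Submodule.mem_span_singleton_self (e n))
  choose a ha using hstep
  have hv0 : v 0 = 0 := tendsto_nhds_unique (hv 0) (by simp)
  exact ⟨a, fun N => by simp_rw [ha, Finset.sum_range_sub, hv0, sub_zero]⟩

namespace HasUniqueExpansion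

variable (he : HasUniqueExpansion 𝕜 e)

noncomputable def coeff (x : X) : ℕ → 𝕜 := (he x).exists.choose

theorem tendsto_coeff (x : X) :
    Tendsto (fun N => ∑ i ∈ Finset.range N, he.coeff x i • e i) atTop (𝓝 x) :=
  (he x).exists.choose_spec

theorem eq_coeff {x : X} {c : ℕ → 𝕜}
    (hc : Tendsto (fun N => ∑ i ∈ Finset.range N, c i • e i) atTop (𝓝 x)) : c = he.coeff x :=
  (he x).unique hc (he.tendsto_coeff x)

theorem coeff_add (x y : X) : he.coeff (x + y) = he.coeff x + he.coeff y :=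
  (he.eq_coeff (by simpa [add_smul, Finset.sum_add_distrib] using
    (he.tendsto_coeff x).add (he.tendsto_coeff y))).symm

theorem coeff_smul (a : 𝕜) (x : X) : he.coeff (a • x) = a • he.coeff x :=
  (he.eq_coeff (by simpa [smul_smul, Finset.smul_sum] using
    (he.tendsto_coeff x).const_smul a)).symm

theorem coeff_basis (j : ℕ) : he.coeff (e j) = Pi.single j 1 := by
  refine (he.eq_coeff (tendsto_atTop_of_eventually_const (i₀ := j + 1) fun N hN => ?_)).symm
  simp [Pi.single_apply, Finset.mem_range.2 (Nat.lt_of_succ_le hN)]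

theorem ne_zero (he : HasUniqueExpansion 𝕜 e) (j : ℕ) : e j ≠ 0 := by
  intro hj
  have h := congrFun (he.coeff_basis j) j
  rw [hj, show (0 : X) = (0 : 𝕜) • 0 from (zero_smul 𝕜 _).symm, he.coeff_smul] at h
  simp at h

theorem exists_norm_partialSum_le (x : X) :
    ∃ C, ∀ N, ‖∑ i ∈ Finset.range N, he.coeff x i • e i‖ ≤ C := by
  obtain ⟨C, hC⟩ := (Metric.isBounded_range_of_tendsto _ (he.tendsto_coeff x)).exists_norm_le
  exact ⟨C, fun N => hC _ (Set.mem_range_self N)⟩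

noncomputable def partialSums : X →ₗ[𝕜] ℕ →ᵇ X where
  toFun x := BoundedContinuousFunction.ofNormedAddCommGroupDiscrete
    (fun N => ∑ i ∈ Finset.range N, he.coeff x i • e i)
    (he.exists_norm_partialSum_le x).choose (he.exists_norm_partialSum_le x).choose_spec
  map_add' x y := by
    ext N
    simp [he.coeff_add, add_smul, Finset.sum_add_distrib]
  map_smul' a x := by
    ext N
    simp [he.coeff_smul, smul_smul, Finset.smul_sum]

@[simp]
theorem partialSums_apply (x : X) (N : ℕ) :
    he.partialSums x N = ∑ i ∈ Finset.range N, he.coeff x i • e i :=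
  rfl

variable [CompleteSpace 𝕜] [CompleteSpace X]

theorem continuous_partialSums : Continuous he.partialSums := by
  refine he.partialSums.continuous_of_seq_closed_graph fun u x v hu hv => ?_
  obtain ⟨a, ha⟩ := exists_eq_sum_range_of_tendsto fun N =>
    ((continuous_eval_const N).tendsto v).comp hv
  have hlim : Tendsto v atTop (𝓝 x) :=
    (tendsto_iff_tendstoUniformly.1 hv).tendsto_of_eventually_tendsto
      (Eventually.of_forall fun k => he.tendsto_coeff (u k)) hu
  have hax : a = he.coeff x := he.eq_coeff (by simpa only [← ha] using hlim)
  ext N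
  simp [ha, hax]

theorem continuous_coeff (n : ℕ) : Continuous fun x => he.coeff x n := by
  rw [(isClosedEmbedding_smul_left (he.ne_zero n)).continuous_iff]
  have hdiff : (fun x => he.coeff x n • e n) =
      fun x => he.partialSums x (n + 1) - he.partialSums x n := by
    ext x
    simp [Finset.sum_range_succ]
  rw [Function.comp_def, hdiff]
  exact ((continuous_eval_const _).comp he.continuous_partialSums).sub
    ((continuous_eval_const _).comp he.continuous_partialSums)

noncomputable def coord (n : ℕ) : StrongDual 𝕜 X where
  toFun x := he.coeff x n
  map_add' x y := by simp [he.coeff_add]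
  map_smul' a x := by simp [he.coeff_smul]
  cont := he.continuous_coeff n

noncomputable def schauderBasis : SchauderBasis 𝕜 X where
  basis := e
  coord := he.coord
  -- `congr` reconciles the two `DecidableEq ℕ` instances inside `Pi.single`
  ortho i j := (congrFun (he.coeff_basis j) i).trans (by congr)
  expansion x := by
    rw [HasSum, SummationFilter.conditional_filter_eq_map_range, tendsto_map'_iff]
    exact he.tendsto_coeff x

end HasUniqueExpansion

end

/-- If a Banach space `X` admits a Schauder basis `(e_n)` (every `x` has a
unique representation `x = ∑ₙ cₙ eₙ`), then every approximate Bessel sequence `(f, τ)`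
for `X` can be expanded to an approximate Schauder frame for `X`. -/
theorem approxBessel_expands_to_ASF_of_schauderBasis
    {𝕜 : Type*} [RCLike 𝕜] {X : Type*} [NormedAddCommGroup X]
    [NormedSpace 𝕜 X] [CompleteSpace X]
    -- `X` admits a Schauder basis
    (e : ℕ → X)
    (hbasis : ∀ x : X, ∃! c : ℕ → 𝕜,
      Tendsto (fun N => ∑ i ∈ Finset.range N, c i • e i) atTop (𝓝 x))
    -- `(f, τ)` is an approximate Bessel sequence with frame operator `S`
    (f : ℕ → X →L[𝕜] 𝕜) (τ : ℕ → X) (S : X →L[𝕜] X)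
    (hBessel : ∀ x : X,
      Tendsto (fun N => ∑ i ∈ Finset.range N, f i x • τ i) atTop (𝓝 (S x))) :
    -- there is an expansion `((f) ∪ (h), (τ) ∪ (ρ))` which is an ASF for `X`
    ∃ (h : ℕ → X →L[𝕜] 𝕜) (ρ : ℕ → X) (T : X ≃L[𝕜] X), ∀ x : X, ∃ y z : X,
      Tendsto (fun N => ∑ i ∈ Finset.range N, f i x • τ i) atTop (𝓝 y) ∧
      Tendsto (fun N => ∑ i ∈ Finset.range N, h i x • ρ i) atTop (𝓝 z) ∧
      y + z = T x := by
  let b : SchauderBasis 𝕜 X := HasUniqueExpansion.schauderBasis hbasis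
  refine ⟨fun i => (b.coord i).comp (ContinuousLinearMap.id 𝕜 X - S), b,
    ContinuousLinearEquiv.refl 𝕜 X, fun x => ⟨S x, x - S x, hBessel x, ?_, add_sub_cancel _ _⟩⟩
  simpa [b.proj_apply] using b.tendsto_proj (x - S x)
end

section
/- Let p ∈ [1, ∞) and let (f_n)_{n∈ℕ} in (ℓ^p(ℕ))* and (τ_n)_{n∈ℕ} in ℓ^p(ℕ) form a p-approximate Bessel sequence for ℓ^p(ℕ) with frame operator S_{f,τ}. Let (e_n)_{n∈ℕ} be the standard unit vectors of ℓ^p(ℕ) and (ζ_n)_{n∈ℕ} the coordinate functionals. Define h_n := ζ_n and ρ_n := (I − S_{f,τ})e_n for all n ∈ ℕ. Then the combined pair ((f_n)∪(h_n), (τ_n)∪(ρ_n)) (indexed over ℕ ⊕ ℕ) is a p-approximate Schauder frame for ℓ^p(ℕ): its combined analysis map x ↦ (f_n(x))_n ∪ (h_n(x))_n is a bounded operator into ℓ^p(ℕ ⊕ ℕ), its combined synthesis map is a bounded operator from ℓ^p(ℕ ⊕ ℕ) to ℓ^p(ℕ), and its frame operator is the identity. -/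
open Filter Topology
open scoped ENNReal

/-!
The combined analysis map is `x ↦ (θf x, x)` and the combined synthesis map is
`a ↦ θτ (a ∘ inl) + (I - S) (a ∘ inr)`, so the frame operator is `S x + (I - S) x = x`.
The `ρ`-half of the synthesis series converges because `(I - S) eₙ = ρₙ`, `I - S` is continuous
and, for `p < ∞`, every `b ∈ ℓ^p` is the sum of `b n • eₙ`.
-/

namespace lp

variable {𝕜 : Type*} [NormedField 𝕜] {E : Type*} [NormedAddCommGroup E] [NormedSpace 𝕜 E]
  {α β : Type*} {p : ℝ≥0∞}

theorem sum_rpow_comp_le_norm_rpow (hp : 0 < p.toReal) (x : lp (fun _ : α => E) p)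
    {e : β → α} (he : e.Injective) (s : Finset β) :
    ∑ i ∈ s, ‖x (e i)‖ ^ p.toReal ≤ ‖x‖ ^ p.toReal := by
  simpa [Finset.sum_map] using sum_rpow_le_norm_rpow hp x (s.map ⟨e, he⟩)

theorem sum_rpow_sumElim_le (hp : 0 < p.toReal) (x : lp (fun _ : α => E) p)
    (y : lp (fun _ : β => E) p) (s : Finset (α ⊕ β)) :
    ∑ i ∈ s, ‖Sum.elim (⇑x) (⇑y) i‖ ^ p.toReal ≤ ‖x‖ ^ p.toReal + ‖y‖ ^ p.toReal := by
  rw [← Finset.toLeft_disjSum_toRight (u := s), Finset.sum_disjSum]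
  exact add_le_add (sum_rpow_le_norm_rpow hp x _) (sum_rpow_le_norm_rpow hp y _)

variable [Fact (1 ≤ p)]

variable (𝕜) in
noncomputable def compCLM (hp : p ≠ ∞) {e : β → α} (he : e.Injective) :
    lp (fun _ : α => E) p →L[𝕜] lp (fun _ : β => E) p :=
  have hp' : 0 < p.toReal := (ENNReal.toReal_pos_iff_ne_top p).2 hp
  LinearMap.mkContinuous
    { toFun := fun x => ⟨x ∘ e, memℓp_gen' (sum_rpow_comp_le_norm_rpow hp' x he)⟩
      map_add' := fun _ _ => rfl
      map_smul' := fun _ _ => rfl }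
    1 fun x => by
      rw [one_mul]
      exact norm_le_of_forall_sum_le hp' (norm_nonneg x) (sum_rpow_comp_le_norm_rpow hp' x he)

variable (𝕜) in
noncomputable def sumElimCLM (hp : p ≠ ∞) :
    lp (fun _ : α => E) p × lp (fun _ : β => E) p →L[𝕜] lp (fun _ : α ⊕ β => E) p :=
  have hp1 : 1 ≤ p.toReal := (ENNReal.dichotomy p).resolve_left hp
  have hp' : 0 < p.toReal := zero_lt_one.trans_le hp1
  LinearMap.mkContinuous
    { toFun := fun v => ⟨Sum.elim v.1 v.2, memℓp_gen' (sum_rpow_sumElim_le hp' v.1 v.2)⟩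
      map_add' := fun v w => lp.ext (by ext (i | i) <;> rfl)
      map_smul' := fun c v => lp.ext (by ext (i | i) <;> rfl) }
    2 fun v => calc
      _ ≤ ‖v.1‖ + ‖v.2‖ :=
        norm_le_of_forall_sum_le hp' (by positivity) fun s =>
          (sum_rpow_sumElim_le hp' v.1 v.2 s).trans
            (Real.add_rpow_le_rpow_add (norm_nonneg _) (norm_nonneg _) hp1)
      _ ≤ 2 * ‖v‖ := by linarith [norm_fst_le v, norm_snd_le v]

@[simp]
theorem compCLM_inl_sumElimCLM (hp : p ≠ ∞) (v : lp (fun _ : α => E) p × lp (fun _ : β => E) p) :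
    compCLM 𝕜 hp Sum.inl_injective (sumElimCLM 𝕜 hp v) = v.1 :=
  rfl

@[simp]
theorem compCLM_inr_sumElimCLM (hp : p ≠ ∞) (v : lp (fun _ : α => E) p × lp (fun _ : β => E) p) :
    compCLM 𝕜 hp Sum.inr_injective (sumElimCLM 𝕜 hp v) = v.2 :=
  rfl

theorem hasSum_smul_map_single [DecidableEq α] (hp : p ≠ ∞) {X : Type*} [AddCommMonoid X]
    [TopologicalSpace X] [Module 𝕜 X] (T : lp (fun _ : α => 𝕜) p →L[𝕜] X)
    (a : lp (fun _ : α => 𝕜) p) :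
    HasSum (fun i => a i • T (lp.single p i 1)) (T a) := by
  convert (lp.hasSum_single hp a).map T T.continuous using 1
  ext i
  rw [Function.comp_apply, ← map_smul, ← lp.single_smul, smul_eq_mul, mul_one]

end lp

/-- Let `p ∈ [1, ∞)` and let `(f, τ)` be a p-approximate Bessel sequence
for `ℓ^p(ℕ)` (analysis map `θf` and synthesis map `θτ` bounded) with frame operator
`S = θτ ∘ θf`. With `hₙ := ζₙ` (coordinate functionals) and `ρₙ := (I - S) eₙ`
(`e n = lp.single p n 1` the standard unit vectors), the combined pair
`((f) ∪ (h), (τ) ∪ (ρ))`, indexed over `ℕ ⊕ ℕ`, is a p-approximate Schauder frame for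
`ℓ^p(ℕ)`: its combined analysis map is a bounded operator into `ℓ^p(ℕ ⊕ ℕ)`, its
combined synthesis map is a bounded operator from `ℓ^p(ℕ ⊕ ℕ)` to `ℓ^p(ℕ)`, and its
frame operator is the identity. -/
theorem pApproxBessel_lp_expands_to_pASF
    {𝕜 : Type*} [RCLike 𝕜] (p : ℝ≥0∞) [Fact (1 ≤ p)] (hp : p ≠ ∞)
    (f : ℕ → lp (fun _ : ℕ => 𝕜) p →L[𝕜] 𝕜) (τ : ℕ → lp (fun _ : ℕ => 𝕜) p)
    -- `(f, τ)` is a p-approximate Bessel sequence: bounded analysis map `θf` ...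
    (θf : lp (fun _ : ℕ => 𝕜) p →L[𝕜] lp (fun _ : ℕ => 𝕜) p)
    (hθf : ∀ (x : lp (fun _ : ℕ => 𝕜) p) (n : ℕ), θf x n = f n x)
    -- ... and bounded synthesis map `θτ`
    (θτ : lp (fun _ : ℕ => 𝕜) p →L[𝕜] lp (fun _ : ℕ => 𝕜) p)
    (hθτ : ∀ a : lp (fun _ : ℕ => 𝕜) p,
      Tendsto (fun N => ∑ i ∈ Finset.range N, a i • τ i) atTop (𝓝 (θτ a)))
    -- coordinate functionals `ζ`
    (ζ : ℕ → lp (fun _ : ℕ => 𝕜) p →L[𝕜] 𝕜)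
    (hζ : ∀ (n : ℕ) (x : lp (fun _ : ℕ => 𝕜) p), ζ n x = x n)
    -- `hₙ := ζₙ` and `ρₙ := (I - S) eₙ` where `S = θτ ∘ θf` is the frame operator
    (h : ℕ → lp (fun _ : ℕ => 𝕜) p →L[𝕜] 𝕜) (ρ : ℕ → lp (fun _ : ℕ => 𝕜) p)
    (hdef : ∀ n, h n = ζ n)
    (ρdef : ∀ n, ρ n =
      lp.single p n (1 : 𝕜) - θτ (θf (lp.single p n (1 : 𝕜)))) :
    ∃ (Θ : lp (fun _ : ℕ => 𝕜) p →L[𝕜] lp (fun _ : ℕ ⊕ ℕ => 𝕜) p)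
      (Γ : lp (fun _ : ℕ ⊕ ℕ => 𝕜) p →L[𝕜] lp (fun _ : ℕ => 𝕜) p),
      -- combined analysis map
      (∀ (x : lp (fun _ : ℕ => 𝕜) p) (n : ℕ), Θ x (Sum.inl n) = f n x) ∧
      (∀ (x : lp (fun _ : ℕ => 𝕜) p) (n : ℕ), Θ x (Sum.inr n) = h n x) ∧
      -- combined synthesis map
      (∀ a : lp (fun _ : ℕ ⊕ ℕ => 𝕜) p,
        Tendsto (fun N => ∑ i ∈ Finset.range N, a (Sum.inl i) • τ i
            + ∑ i ∈ Finset.range N, a (Sum.inr i) • ρ i)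
          atTop (𝓝 (Γ a))) ∧
      -- the frame operator of the combined pair is the identity
      (∀ x : lp (fun _ : ℕ => 𝕜) p, Γ (Θ x) = x) := by
  set S := θτ ∘L θf
  refine ⟨lp.sumElimCLM 𝕜 hp ∘L θf.prod (.id 𝕜 _),
    θτ ∘L lp.compCLM 𝕜 hp Sum.inl_injective + (.id 𝕜 _ - S) ∘L lp.compCLM 𝕜 hp Sum.inr_injective,
    hθf, fun x n => by rw [hdef, hζ]; rfl, fun a => ?_, fun x => ?_⟩
  · have hρ := (lp.hasSum_smul_map_single hp (.id 𝕜 _ - S)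
      (lp.compCLM 𝕜 hp Sum.inr_injective a)).tendsto_sum_nat
    simp only [ρdef]
    exact (hθτ (lp.compCLM 𝕜 hp Sum.inl_injective a)).add hρ
  · simp [S]
end
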